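/- Let s and t be positive real numbers with s ≠ t, and let (c_n)_{n∈ℕ} be a nonincreasing sequence of strictly positive real numbers with c_n → 0. Put K = ℓ²(ℕ) and H = K ⊕ K. Let A be the diagonal operator on K with diagonals (c_n^s)_n and B the diagonal operator with diagonals (c_n^t)_n. Then the system (H; K ⊕ 0, graph(A)) is not boundedly isomorphic to (H; K ⊕ 0, graph(B)). -/

import Mathlib

/-!
If `V` is an isomorphism of the two systems with `s < t`, a dimension count gives, for each `n`,
a nonzero `z ∈ graph A` with `z.1` supported on `[0, n]` and `(V z).1` vanishing on `[0, n)`.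
Since `V` preserves `K ⊕ 0`, the second component of `z` is controlled by that of `V z`, so
`cₙ^s ‖z.1‖ ≤ ‖z.2‖ ≤ ‖V⁻¹‖ ‖(V z).2‖ ≤ ‖V⁻¹‖ cₙ^t ‖(V z).1‖ ≤ C cₙ^t ‖z.1‖`.
Thus `cₙ^(t - s)` stays bounded below by `1 / C`, contradicting `cₙ → 0`.
-/

open Filter Topology

noncomputable section

abbrev K : Type := lp (fun _ : ℕ => ℂ) 2

/-- The graph of the diagonal operator with diagonals `a`, as a subspace of `K × K`. -/
def diagGraph (a : ℕ → ℂ) : Submodule ℂ (K × K) where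
  carrier := {p | ∀ n, p.2 n = a n * p.1 n}
  add_mem' := by
    intro p q hp hq n
    simp only [Prod.snd_add, Prod.fst_add, lp.coeFn_add, Pi.add_apply, hp n, hq n]
    ring
  zero_mem' := by
    intro n
    simp [lp.coeFn_zero]
  smul_mem' := by
    intro c p hp n
    simp only [Prod.smul_snd, Prod.smul_fst, lp.coeFn_smul, Pi.smul_apply, hp n, smul_eq_mul]
    ring

/-- The subspace K ⊕ 0 of K ⊕ K. -/
def firstSummand : Submodule ℂ (K × K) := (⊤ : Submodule ℂ K).prod (⊥ : Submodule ℂ K)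

theorem lp.norm_le_mul_norm_of_forall {α : Type*} {E F : α → Type*}
    [∀ i, NormedAddCommGroup (E i)] [∀ i, NormedSpace ℝ (E i)] [∀ i, NormedAddCommGroup (F i)]
    {p : ENNReal} [Fact (1 ≤ p)] {f : lp E p} {g : lp F p} {M : ℝ} (hM : 0 ≤ M)
    (h : ∀ i, ‖g i‖ ≤ M * ‖f i‖) : ‖g‖ ≤ M * ‖f‖ :=
  calc ‖g‖ ≤ ‖M • f‖ :=
        lp.norm_mono (zero_lt_one.trans_le Fact.out).ne' fun i => by
          simpa only [lp.coeFn_smul, Pi.smul_apply, norm_smul_of_nonneg hM] using h i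
    _ = M * ‖f‖ := norm_smul_of_nonneg hM f

theorem norm_snd_le_of_mem_diagGraph {a : ℕ → ℂ} {p : K × K} (hp : p ∈ diagGraph a) {M : ℝ}
    (hM : 0 ≤ M) (ha : ∀ k, p.1 k ≠ 0 → ‖a k‖ ≤ M) : ‖p.2‖ ≤ M * ‖p.1‖ := by
  refine lp.norm_le_mul_norm_of_forall hM fun k => ?_
  rw [hp k, norm_mul]
  by_cases hk : p.1 k = 0
  · simp [hk]
  · exact mul_le_mul_of_nonneg_right (ha k hk) (norm_nonneg _)

theorem mul_norm_fst_le_of_mem_diagGraph {a : ℕ → ℂ} {p : K × K} (hp : p ∈ diagGraph a) {m : ℝ}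
    (hm : 0 ≤ m) (ha : ∀ k, p.1 k ≠ 0 → m ≤ ‖a k‖) : m * ‖p.1‖ ≤ ‖p.2‖ := by
  rw [← norm_smul_of_nonneg hm]
  refine lp.norm_mono two_ne_zero fun k => ?_
  rw [lp.coeFn_smul, Pi.smul_apply, norm_smul_of_nonneg hm, hp k, norm_mul]
  by_cases hk : p.1 k = 0
  · simp [hk]
  · exact mul_le_mul_of_nonneg_right (ha k hk) (norm_nonneg _)

theorem norm_snd_apply_le_of_snd_apply_mk_zero {𝕜 E F : Type*} [NontriviallyNormedField 𝕜]
    [NormedAddCommGroup E] [NormedSpace 𝕜 E] [NormedAddCommGroup F] [NormedSpace 𝕜 F]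
    (W : E × F →L[𝕜] E × F) (hW : ∀ x : E, (W (x, 0)).2 = 0) (p : E × F) :
    ‖(W p).2‖ ≤ ‖W‖ * ‖p.2‖ := by
  have hWp : (W p).2 = (W (0, p.2)).2 := by
    conv_lhs => rw [← Prod.fst_add_snd p, map_add, Prod.snd_add, hW, zero_add]
  calc ‖(W p).2‖ ≤ ‖W (0, p.2)‖ := hWp ▸ norm_snd_le _
    _ ≤ ‖W‖ * ‖((0 : E), p.2)‖ := W.le_opNorm _
    _ = ‖W‖ * ‖p.2‖ := by rw [Prod.norm_mk, norm_zero, max_eq_right (norm_nonneg _)]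

theorem snd_symm_apply_mk_zero_of_image_firstSummand {V : (K × K) ≃L[ℂ] (K × K)}
    (hV : V '' firstSummand = firstSummand) (x : K) : (V.symm (x, 0)).2 = 0 := by
  obtain ⟨u, hu, hVu⟩ : (x, (0 : K)) ∈ V '' firstSummand := by
    rw [hV]
    simp [firstSummand]
  rw [← hVu, V.symm_apply_apply]
  simpa [firstSummand] using hu

theorem exists_mem_diagGraph_fst_ne_zero_mem_ker (a : ℕ → ℂ) {n : ℕ}
    (f : K × K →ₗ[ℂ] Fin n → ℂ) :
    ∃ z ∈ diagGraph a, z.1 ≠ 0 ∧ (∀ k, z.1 k ≠ 0 → k ≤ n) ∧ f z = 0 := by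
  let e : Fin (n + 1) → K × K := fun k => (lp.single 2 (k : ℕ) 1, lp.single 2 (k : ℕ) (a k))
  have he : ∀ k, e k ∈ diagGraph a := by
    intro k m
    rcases eq_or_ne m k with rfl | hm
    · simp [e]
    · simp [e, hm]
  obtain ⟨l, hl, hl0⟩ := (LinearMap.ker (f ∘ₗ Fintype.linearCombination ℂ e)).ne_bot_iff.mp
    (LinearMap.ker_ne_bot_of_finrank_lt (by simp))
  have hz₁ : ∀ m, (Fintype.linearCombination ℂ e l).1 m =
      ∑ k : Fin (n + 1), l k * (Pi.single (k : ℕ) (1 : ℂ) : ℕ → ℂ) m := by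
    intro m
    simp only [Fintype.linearCombination_apply, Prod.fst_sum, Prod.smul_fst, lp.coeFn_sum,
      Finset.sum_apply, lp.coeFn_smul, Pi.smul_apply, lp.single_apply, smul_eq_mul, e]
  have hz : Fintype.linearCombination ℂ e l ∈ diagGraph a := by
    rw [Fintype.linearCombination_apply]
    exact Submodule.sum_mem _ fun k _ => Submodule.smul_mem _ _ (he k)
  refine ⟨_, hz, ?_, ?_, hl⟩
  · obtain ⟨k₀, hk₀⟩ := Function.ne_iff.mp hl0
    refine fun h => hk₀ ?_
    have := hz₁ k₀
    rw [h, Finset.sum_eq_single k₀ (fun k _ hk => by simp [Fin.val_injective.ne hk.symm])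
      (by simp)] at this
    simpa using this.symm
  · intro m hm
    by_contra! hnm
    refine hm ((hz₁ m).trans (Finset.sum_eq_zero fun k _ => ?_))
    simp [(k.isLt.trans_le hnm).ne']

theorem le_norm_symm_mul_norm_mul_of_mapsTo_diagGraph {a b : ℕ → ℂ} {M α β : ℝ} {n : ℕ}
    (V : (K × K) ≃L[ℂ] (K × K)) (hV₁ : ∀ x : K, (V.symm (x, 0)).2 = 0)
    (hV₂ : Set.MapsTo V (diagGraph a) (diagGraph b)) (ha : ∀ k, ‖a k‖ ≤ M) (hα₀ : 0 ≤ α)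
    (hα : ∀ k ≤ n, α ≤ ‖a k‖) (hβ : ∀ k, n ≤ k → ‖b k‖ ≤ β) :
    α ≤ ‖(V.symm : (K × K) →L[ℂ] (K × K))‖ * ‖(V : (K × K) →L[ℂ] (K × K))‖ * max 1 M * β := by
  obtain ⟨z, hz, hz₁, hz_supp, hVz⟩ := exists_mem_diagGraph_fst_ne_zero_mem_ker a
    (LinearMap.pi fun m : Fin n =>
      lp.evalₗ _ 2 (m : ℕ) ∘ₗ LinearMap.fst ℂ K K ∘ₗ (V : (K × K) →ₗ[ℂ] (K × K)))
  have hVz_supp : ∀ k, (V z).1 k ≠ 0 → n ≤ k := fun k hk =>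
    not_lt.mp fun hkn => hk (congrFun hVz ⟨k, hkn⟩)
  have hM : 0 ≤ M := (norm_nonneg _).trans (ha 0)
  have hβ₀ : 0 ≤ β := (norm_nonneg _).trans (hβ n le_rfl)
  have hz_norm : ‖z‖ ≤ max 1 M * ‖z.1‖ := by
    refine max_le (le_mul_of_one_le_left (norm_nonneg _) (le_max_left _ _)) ?_
    calc ‖z.2‖ ≤ M * ‖z.1‖ := norm_snd_le_of_mem_diagGraph hz hM fun k _ => ha k
      _ ≤ max 1 M * ‖z.1‖ := by gcongr; exact le_max_right _ _
  have hchain : α * ‖z.1‖ ≤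
      ‖(V.symm : (K × K) →L[ℂ] (K × K))‖ * ‖(V : (K × K) →L[ℂ] (K × K))‖ * max 1 M * β *
        ‖z.1‖ :=
    calc α * ‖z.1‖ ≤ ‖z.2‖ :=
          mul_norm_fst_le_of_mem_diagGraph hz hα₀ fun k hk => hα k (hz_supp k hk)
      _ = ‖((V.symm : (K × K) →L[ℂ] (K × K)) (V z)).2‖ := by simp
      _ ≤ ‖(V.symm : (K × K) →L[ℂ] (K × K))‖ * ‖(V z).2‖ :=
          norm_snd_apply_le_of_snd_apply_mk_zero _ hV₁ _
      _ ≤ ‖(V.symm : (K × K) →L[ℂ] (K × K))‖ * (β * ‖V z‖) := by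
          gcongr
          exact (norm_snd_le_of_mem_diagGraph (hV₂ hz) hβ₀ fun k hk => hβ k (hVz_supp k hk)).trans
            (by gcongr; exact norm_fst_le _)
      _ ≤ ‖(V.symm : (K × K) →L[ℂ] (K × K))‖ *
            (β * (‖(V : (K × K) →L[ℂ] (K × K))‖ * (max 1 M * ‖z.1‖))) := by
          gcongr
          exact ((V : (K × K) →L[ℂ] (K × K)).le_opNorm z).trans
            (mul_le_mul_of_nonneg_left hz_norm (norm_nonneg _))
      _ = _ := by ring
  exact le_of_mul_le_mul_right hchain (norm_pos_iff.mpr hz₁)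

theorem exists_mul_rpow_lt_rpow {c : ℕ → ℝ} (hc_pos : ∀ n, 0 < c n)
    (hc_lim : Tendsto c atTop (𝓝 0)) {s t : ℝ} (hst : s < t) (C : ℝ) :
    ∃ n, C * c n ^ t < c n ^ s := by
  have hlim : Tendsto (fun n => C * c n ^ (t - s)) atTop (𝓝 0) := by
    simpa [Real.zero_rpow (sub_ne_zero.mpr hst.ne')] using
      (hc_lim.rpow_const (Or.inr (sub_pos.mpr hst).le)).const_mul C
  obtain ⟨n, hn⟩ := (hlim.eventually (gt_mem_nhds one_pos)).exists
  refine ⟨n, ?_⟩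
  calc C * c n ^ t = C * c n ^ (t - s) * c n ^ s := by
        rw [mul_assoc, ← Real.rpow_add (hc_pos n), sub_add_cancel]
    _ < 1 * c n ^ s := mul_lt_mul_of_pos_right hn (Real.rpow_pos_of_pos (hc_pos n) s)
    _ = c n ^ s := one_mul _

theorem not_image_diagGraph_rpow_eq_of_lt {s t : ℝ} (hs : 0 < s) (ht : 0 < t) (hst : s < t)
    {c : ℕ → ℝ} (hc_anti : Antitone c) (hc_pos : ∀ n, 0 < c n)
    (hc_lim : Tendsto c atTop (𝓝 0)) (V : (K × K) ≃L[ℂ] (K × K))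
    (hV₁ : V '' firstSummand = firstSummand)
    (hV₂ : V '' diagGraph (fun n : ℕ => ((c n ^ s : ℝ) : ℂ)) =
      diagGraph fun n : ℕ => ((c n ^ t : ℝ) : ℂ)) : False := by
  have hnorm : ∀ (r : ℝ) (k : ℕ), ‖((c k ^ r : ℝ) : ℂ)‖ = c k ^ r := fun r k =>
    Complex.norm_of_nonneg (Real.rpow_nonneg (hc_pos k).le r)
  have hmono : ∀ {r : ℝ}, 0 ≤ r → ∀ {k n : ℕ}, n ≤ k → c k ^ r ≤ c n ^ r := fun hr k _ hk =>
    Real.rpow_le_rpow (hc_pos k).le (hc_anti hk) hr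
  obtain ⟨n, hn⟩ := exists_mul_rpow_lt_rpow hc_pos hc_lim hst
    (‖(V.symm : (K × K) →L[ℂ] (K × K))‖ * ‖(V : (K × K) →L[ℂ] (K × K))‖ * max 1 (c 0 ^ s))
  refine hn.not_ge (le_norm_symm_mul_norm_mul_of_mapsTo_diagGraph V
    (snd_symm_apply_mk_zero_of_image_firstSummand hV₁) (hV₂ ▸ Set.mapsTo_image V _)
    (fun k => (hnorm s k).trans_le (hmono hs.le k.zero_le)) (Real.rpow_nonneg (hc_pos n).le s)
    (fun k hk => (hmono hs.le hk).trans_eq (hnorm s k).symm)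
    (fun k hk => (hnorm t k).trans_le (hmono ht.le hk)))

theorem not_boundedly_isomorphic_different_powers
    (s t : ℝ) (hs : 0 < s) (ht : 0 < t) (hst : s ≠ t)
    (c : ℕ → ℝ) (hc_anti : Antitone c) (hc_pos : ∀ n, 0 < c n)
    (hc_lim : Filter.Tendsto c Filter.atTop (nhds 0)) :
    ¬ ∃ V : (K × K) ≃L[ℂ] (K × K),
        V '' (firstSummand : Set (K × K)) = (firstSummand : Set (K × K)) ∧
        V '' ((diagGraph fun n : ℕ => ((c n ^ s : ℝ) : ℂ)) : Set (K × K)) =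
          ((diagGraph fun n : ℕ => ((c n ^ t : ℝ) : ℂ)) : Set (K × K)) := by
  rintro ⟨V, hV₁, hV₂⟩
  rcases hst.lt_or_gt with hlt | hgt
  · exact not_image_diagGraph_rpow_eq_of_lt hs ht hlt hc_anti hc_pos hc_lim V hV₁ hV₂
  · exact not_image_diagGraph_rpow_eq_of_lt ht hs hgt hc_anti hc_pos hc_lim V.symm
      (by rw [← hV₁, V.symm_image_image, hV₁]) (by rw [← hV₂, V.symm_image_image])

end
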